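/- arXiv:math/0407061 — 2 statements merged into one kernel-verified Lean document; each statement's English description precedes it below -/
import Mathlib

section
/- For every positive integer n, the number of representations of n as an ordered sum of two squares of integers equals 4(d_1(n) - d_3(n)), where d_j(n) is the number of divisors of n congruent to j modulo 4. -/
/-!
Let `r(n)` count Gaussian integers of norm `n`, i.e. pairs `(a, b)` with `a² + b² = n`. For coprime
`m` and `n`, every `z` of norm `mn` factors as `z = xy` with `N x = m` and `N y = n`, uniquely up to
moving one of the four units from one factor to the other; hence `4 r(mn) = r(m) r(n)`, and `r / 4`
is multiplicative like `n ↦ ∑_{d ∣ n} χ₄ d`. At prime powers: `2` and `p ≡ 3 (mod 4)` are norms of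
Gaussian primes `t = 1 + i` and `t = p` dividing their conjugates, so every element of norm
`N t * M` is a multiple of `t` and `r(N t * M) = r(M)`. For `p ≡ 1 (mod 4)`, `p = π π̄` with `π, π̄`
non-associate primes; an element of norm `p * M` is divisible by `π` or by `π̄`, and by both iff it
is divisible by `p`, so inclusion-exclusion gives `r(p^(k+2)) + r(p^k) = 2 r(p^(k+1))`, whence
`r(p^k) = 4 (k + 1)`.
-/

open Finset ZMod

theorem Nat.Coprime.eq_of_mul_eq_of_dvd_sq {a b m n : ℕ} (hmn : m.Coprime n) (ha : a ∣ m ^ 2)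
    (hb : b ∣ n ^ 2) (h : a * b = m * n) : a = m := by
  refine Nat.dvd_antisymm ?_ ?_
  · exact ((hmn.pow_left 2).coprime_dvd_left ha).dvd_of_dvd_mul_right ⟨b, h.symm⟩
  · exact ((hmn.pow_right 2).coprime_dvd_right hb).dvd_of_dvd_mul_right ⟨n, h⟩

theorem Nat.Coprime.sum_divisors_mulChar_mul {R : Type*} [CommSemiring R] {N m n : ℕ}
    (χ : MulChar (ZMod N) R) (hmn : m.Coprime n) :
    ∑ d ∈ (m * n).divisors, χ d = (∑ d ∈ m.divisors, χ d) * ∑ d ∈ n.divisors, χ d := by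
  rw [hmn.divisors_mul, sum_map, sum_mul_sum, ← sum_product']
  refine Eq.trans ?_ (sum_attach _ fun q : ℕ × ℕ => χ q.1 * χ q.2)
  simp

theorem Nat.sum_divisors_χ₄_eq_card_sub_card (n : ℕ) :
    ∑ d ∈ n.divisors, χ₄ d =
      (#(n.divisors.filter (· % 4 = 1)) : ℤ) - #(n.divisors.filter (· % 4 = 3)) := by
  simp only [card_filter, Nat.cast_sum, ← sum_sub_distrib]
  refine sum_congr rfl fun d _ => ?_
  rw [χ₄_nat_eq_if_mod_four]
  split_ifs <;> omega

theorem star_dvd_star {R : Type*} [CommMonoid R] [StarMul R] {x y : R} (h : x ∣ y) :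
    star x ∣ star y := by
  obtain ⟨c, rfl⟩ := h
  exact ⟨star c, star_mul' x c⟩

namespace GaussianInt

theorem natAbs_norm_mul (x y : GaussianInt) :
    (x * y).norm.natAbs = x.norm.natAbs * y.norm.natAbs := by
  rw [Zsqrtd.norm_mul, Int.natAbs_mul]

theorem natAbs_norm_star (x : GaussianInt) : (star x).norm.natAbs = x.norm.natAbs := by
  rw [Zsqrtd.norm_conj]

theorem natAbs_norm_natCast (n : ℕ) : (n : GaussianInt).norm.natAbs = n * n := by
  rw [Zsqrtd.norm_natCast, Int.natAbs_mul, Int.natAbs_natCast]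

theorem mul_star_eq_natAbs_norm (x : GaussianInt) :
    x * star x = (x.norm.natAbs : GaussianInt) := by
  rw [natCast_natAbs_norm, Zsqrtd.norm_eq_mul_conj]

theorem natAbs_norm_dvd_natAbs_norm {x y : GaussianInt} (h : x ∣ y) :
    x.norm.natAbs ∣ y.norm.natAbs := by
  obtain ⟨c, rfl⟩ := h
  exact natAbs_norm_mul x c ▸ dvd_mul_right _ _

theorem natAbs_norm_eq_zero {x : GaussianInt} : x.norm.natAbs = 0 ↔ x = 0 := by
  rw [Int.natAbs_eq_zero, norm_eq_zero]

theorem natAbs_norm_eq_iff {x : GaussianInt} {n : ℕ} :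
    x.norm.natAbs = n ↔ x.re ^ 2 + x.im ^ 2 = n := by
  rw [← Int.natCast_inj, abs_natCast_norm, Zsqrtd.norm_def]
  constructor <;> intro h <;> linarith

theorem finite_setOf_natAbs_norm_eq (n : ℕ) :
    {x : GaussianInt | x.norm.natAbs = n}.Finite := by
  refine (((Set.finite_Icc (-(n : ℤ)) n).prod (Set.finite_Icc (-(n : ℤ)) n)).image
    fun q : ℤ × ℤ => (⟨q.1, q.2⟩ : GaussianInt)).subset fun x hx => ⟨(x.re, x.im), ?_, rfl⟩
  have hx : x.re.natAbs * x.re.natAbs + x.im.natAbs * x.im.natAbs = n :=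
    (natAbs_norm_eq x).symm.trans hx
  have hre := Nat.le_mul_self x.re.natAbs
  have him := Nat.le_mul_self x.im.natAbs
  simp only [Set.mem_prod, Set.mem_Icc]
  omega

noncomputable def withNorm (n : ℕ) : Finset GaussianInt :=
  (finite_setOf_natAbs_norm_eq n).toFinset

@[simp]
theorem mem_withNorm {n : ℕ} {x : GaussianInt} : x ∈ withNorm n ↔ x.norm.natAbs = n :=
  Set.Finite.mem_toFinset _

theorem withNorm_one : withNorm 1 = {1, -1, ⟨0, 1⟩, ⟨0, -1⟩} := by
  ext ⟨a, b⟩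
  rw [mem_withNorm, natAbs_norm_eq_iff]
  constructor
  · intro h
    simp only [Nat.cast_one] at h
    have ha : -1 ≤ a ∧ a ≤ 1 := by constructor <;> nlinarith
    have hb : -1 ≤ b ∧ b ≤ 1 := by constructor <;> nlinarith
    obtain ⟨ha₁, ha₂⟩ := ha
    obtain ⟨hb₁, hb₂⟩ := hb
    interval_cases a <;> interval_cases b <;> simp_all [Zsqrtd.ext_iff]
  · simp only [mem_insert, mem_singleton, Zsqrtd.ext_iff]
    rintro (h | h | h | h) <;> simp_all

theorem card_withNorm_one : #(withNorm 1) = 4 := by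
  rw [withNorm_one]; decide

theorem exists_mul_eq_of_natAbs_norm_eq_mul {z : GaussianInt} {m n : ℕ} (hmn : m.Coprime n)
    (hz : z.norm.natAbs = m * n) :
    ∃ x y : GaussianInt, x.norm.natAbs = m ∧ y.norm.natAbs = n ∧ z = x * y := by
  have hdvd : z ∣ (m : GaussianInt) * n := by
    rw [← Nat.cast_mul, ← hz, ← mul_star_eq_natAbs_norm]
    exact dvd_mul_right z _
  obtain ⟨x, y, hxm, hyn, rfl⟩ := exists_dvd_and_dvd_of_dvd_mul hdvd
  have hxm := natAbs_norm_dvd_natAbs_norm hxm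
  have hyn := natAbs_norm_dvd_natAbs_norm hyn
  rw [natAbs_norm_natCast, ← sq] at hxm hyn
  rw [natAbs_norm_mul] at hz
  refine ⟨x, y, hmn.eq_of_mul_eq_of_dvd_sq hxm hyn hz, ?_, rfl⟩
  exact hmn.symm.eq_of_mul_eq_of_dvd_sq hyn hxm (by rw [mul_comm, hz, mul_comm])

theorem isCoprime_of_coprime_natAbs_norm {x y : GaussianInt}
    (h : x.norm.natAbs.Coprime y.norm.natAbs) : IsCoprime x y := by
  have h := (Nat.isCoprime_iff_coprime.mpr h).map (Int.castRingHom GaussianInt)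
  simp only [eq_intCast, Int.cast_natCast, ← mul_star_eq_natAbs_norm] at h
  exact h.of_mul_left_left.of_mul_right_left

theorem mul_star_eq_one_of_natAbs_norm_eq_one {u : GaussianInt} (hu : u.norm.natAbs = 1) :
    u * star u = 1 := by
  rw [mul_star_eq_natAbs_norm, hu, Nat.cast_one]

theorem filter_mul_eq_withNorm_prod {m n : ℕ} (hm : m ≠ 0) (hmn : m.Coprime n)
    {x y : GaussianInt} (hx : x ∈ withNorm m) (hy : y ∈ withNorm n) :
    (withNorm m ×ˢ withNorm n).filter (fun q => q.1 * q.2 = x * y) =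
      (withNorm 1).image fun u => (u * x, star u * y) := by
  rw [mem_withNorm] at hx hy
  ext ⟨a, b⟩
  simp only [mem_filter, mem_product, mem_withNorm, mem_image, Prod.mk.injEq]
  constructor
  · rintro ⟨⟨ha, hb⟩, hab⟩
    have hxa : x ∣ a := (isCoprime_of_coprime_natAbs_norm (by rwa [hx, hb])).dvd_of_dvd_mul_right
      (hab ▸ dvd_mul_right x y)
    have hax : a ∣ x := (isCoprime_of_coprime_natAbs_norm (by rwa [ha, hy])).dvd_of_dvd_mul_right
      (hab ▸ dvd_mul_right a b)
    obtain ⟨u, rfl⟩ := associated_of_dvd_dvd hxa hax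
    have hu : (u : GaussianInt).norm.natAbs = 1 := Zsqrtd.norm_eq_one_iff.mpr u.isUnit
    have hy : y = u * b := by
      refine mul_left_cancel₀ (natAbs_norm_eq_zero.not.mp ?_) (hab.symm.trans (mul_assoc _ _ _))
      rwa [hx]
    refine ⟨u, hu, mul_comm _ _, ?_⟩
    rw [hy, ← mul_assoc, mul_comm _ (u : GaussianInt), mul_star_eq_one_of_natAbs_norm_eq_one hu,
      one_mul]
  · rintro ⟨u, hu, rfl, rfl⟩
    refine ⟨⟨?_, ?_⟩, ?_⟩
    · rw [natAbs_norm_mul, hu, one_mul, hx]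
    · rw [natAbs_norm_mul, natAbs_norm_star, hu, one_mul, hy]
    · rw [mul_mul_mul_comm, mul_star_eq_one_of_natAbs_norm_eq_one hu, one_mul]

theorem card_filter_mul_eq_withNorm_prod {m n : ℕ} (hm : m ≠ 0) (hmn : m.Coprime n)
    {x y : GaussianInt} (hx : x ∈ withNorm m) (hy : y ∈ withNorm n) :
    #((withNorm m ×ˢ withNorm n).filter (fun q => q.1 * q.2 = x * y)) = 4 := by
  have hx0 : x ≠ 0 := natAbs_norm_eq_zero.not.mp (by rwa [mem_withNorm.mp hx])
  rw [filter_mul_eq_withNorm_prod hm hmn hx hy, card_image_of_injective, card_withNorm_one]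
  exact fun u v huv => mul_right_cancel₀ hx0 (Prod.ext_iff.mp huv).1

theorem card_withNorm_mul {m n : ℕ} (hm : m ≠ 0) (hmn : m.Coprime n) :
    #(withNorm m) * #(withNorm n) = 4 * #(withNorm (m * n)) := by
  rw [← card_product,
    card_eq_sum_card_fiberwise (f := fun q => q.1 * q.2) (t := withNorm (m * n))]
  · rw [sum_const_nat fun z hz => ?_, mul_comm]
    obtain ⟨x, y, hx, hy, rfl⟩ := exists_mul_eq_of_natAbs_norm_eq_mul hmn (mem_withNorm.mp hz)
    exact card_filter_mul_eq_withNorm_prod hm hmn (mem_withNorm.mpr hx) (mem_withNorm.mpr hy)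
  · intro q hq
    simp only [coe_product, Set.mem_prod, mem_coe, mem_withNorm] at hq ⊢
    rw [natAbs_norm_mul, hq.1, hq.2]

open scoped Classical in
theorem filter_dvd_withNorm_mul {t : GaussianInt} (ht : t ≠ 0) (M : ℕ) :
    (withNorm (t.norm.natAbs * M)).filter (t ∣ ·) = (withNorm M).image (t * ·) := by
  ext z
  simp only [mem_filter, mem_withNorm, mem_image]
  constructor
  · rintro ⟨hz, w, rfl⟩
    rw [natAbs_norm_mul] at hz
    exact ⟨w, Nat.eq_of_mul_eq_mul_left (Nat.pos_of_ne_zero (natAbs_norm_eq_zero.not.mpr ht)) hz,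
      rfl⟩
  · rintro ⟨w, hw, rfl⟩
    exact ⟨by rw [natAbs_norm_mul, hw], dvd_mul_right t w⟩

open scoped Classical in
theorem card_filter_dvd_withNorm_mul {t : GaussianInt} (ht : t ≠ 0) (M : ℕ) :
    #((withNorm (t.norm.natAbs * M)).filter (t ∣ ·)) = #(withNorm M) := by
  rw [filter_dvd_withNorm_mul ht, card_image_of_injective _ (mul_right_injective₀ ht)]

theorem dvd_or_star_dvd_of_mem_withNorm {t z : GaussianInt} (ht : Prime t) {M : ℕ}
    (hz : z ∈ withNorm (t.norm.natAbs * M)) : t ∣ z ∨ star t ∣ z := by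
  have htz : t ∣ z * star z := by
    rw [mul_star_eq_natAbs_norm, mem_withNorm.mp hz, Nat.cast_mul, ← mul_star_eq_natAbs_norm,
      mul_assoc]
    exact dvd_mul_right t _
  exact (ht.dvd_or_dvd htz).imp_right fun h => star_star z ▸ star_dvd_star h

theorem card_withNorm_mul_of_dvd_star {t : GaussianInt} (ht : Prime t) (hts : t ∣ star t)
    (M : ℕ) : #(withNorm (t.norm.natAbs * M)) = #(withNorm M) := by
  classical
  refine Eq.trans ?_ (card_filter_dvd_withNorm_mul ht.ne_zero M)
  rw [filter_true_of_mem fun z hz => (dvd_or_star_dvd_of_mem_withNorm ht hz).elim id hts.trans]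

theorem withNorm_eq_empty_of_mod_four_eq_three {n : ℕ} (hn : n % 4 = 3) : withNorm n = ∅ := by
  refine eq_empty_of_forall_notMem fun z hz => ?_
  have h := congrArg (Int.cast : ℤ → ZMod 4) (natAbs_norm_eq_iff.mp (mem_withNorm.mp hz))
  have hn : (n : ZMod 4) = 3 := by rw [← ZMod.natCast_mod, hn]; rfl
  push_cast [hn] at h
  generalize (z.re : ZMod 4) = a, (z.im : ZMod 4) = b at h
  revert a b; decide

theorem prime_of_natAbs_norm_prime {t : GaussianInt} (h : t.norm.natAbs.Prime) : Prime t := by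
  refine UniqueFactorizationMonoid.irreducible_iff_prime.mp
    ⟨fun hu => h.ne_one (Zsqrtd.norm_eq_one_iff.mpr hu), fun a b hab => ?_⟩
  rw [hab, natAbs_norm_mul, Nat.prime_mul_iff] at h
  rcases h with ⟨-, hb⟩ | ⟨-, ha⟩
  exacts [Or.inr (Zsqrtd.norm_eq_one_iff.mp hb), Or.inl (Zsqrtd.norm_eq_one_iff.mp ha)]

theorem card_withNorm_two_pow (k : ℕ) : #(withNorm (2 ^ k)) = 4 := by
  have ht : Prime (⟨1, 1⟩ : GaussianInt) := prime_of_natAbs_norm_prime (by decide)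
  have hts : (⟨1, 1⟩ : GaussianInt) ∣ star ⟨1, 1⟩ := ⟨⟨0, -1⟩, by decide⟩
  induction k with
  | zero => exact card_withNorm_one
  | succ k ih => rw [pow_succ', ← ih]; exact card_withNorm_mul_of_dvd_star ht hts (2 ^ k)

theorem card_withNorm_pow_of_mod_four_eq_three {p : ℕ} (hp : p.Prime) (hp3 : p % 4 = 3)
    (k : ℕ) : #(withNorm (p ^ k)) = if Even k then 4 else 0 := by
  have := Fact.mk hp
  have ht : Prime (p : GaussianInt) := prime_of_nat_prime_of_mod_four_eq_three p hp3
  have hts : (p : GaussianInt) ∣ star (p : GaussianInt) := by rw [star_natCast]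
  induction k using Nat.twoStepInduction with
  | zero => simp [card_withNorm_one]
  | one => simp [withNorm_eq_empty_of_mod_four_eq_three, hp3]
  | more k ih _ =>
    have hpow : p ^ (k + 2) = (p : GaussianInt).norm.natAbs * p ^ k := by
      rw [natAbs_norm_natCast]; ring
    rw [hpow, card_withNorm_mul_of_dvd_star ht hts, ih]
    simp [Nat.even_add]

open scoped Classical in
theorem card_withNorm_mul_add_card_filter {π : GaussianInt} (hπ : Prime π) (hπs : ¬π ∣ star π)
    (M : ℕ) :
    #(withNorm (π.norm.natAbs * M)) +
        #((withNorm (π.norm.natAbs * M)).filter ((π.norm.natAbs : GaussianInt) ∣ ·)) =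
      2 * #(withNorm M) := by
  set S := withNorm (π.norm.natAbs * M)
  have hcop : IsCoprime π (star π) := (Irreducible.coprime_iff_not_dvd hπ.irreducible).mpr hπs
  have hunion : S.filter (π ∣ ·) ∪ S.filter (star π ∣ ·) = S := by
    rw [← filter_or, filter_true_of_mem fun z hz => dvd_or_star_dvd_of_mem_withNorm hπ hz]
  have hinter : S.filter (π ∣ ·) ∩ S.filter (star π ∣ ·) =
      S.filter ((π.norm.natAbs : GaussianInt) ∣ ·) := by
    rw [← filter_and, ← mul_star_eq_natAbs_norm]
    exact filter_congr fun z _ => ⟨fun h => hcop.mul_dvd h.1 h.2,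
      fun h => ⟨dvd_of_mul_right_dvd h, dvd_of_mul_left_dvd h⟩⟩
  have hstar : #(S.filter (star π ∣ ·)) = #(withNorm M) := by
    have := card_filter_dvd_withNorm_mul (star_ne_zero.mpr hπ.ne_zero) M
    rwa [natAbs_norm_star] at this
  calc #S + #(S.filter ((π.norm.natAbs : GaussianInt) ∣ ·))
      = #(S.filter (π ∣ ·) ∪ S.filter (star π ∣ ·)) +
          #(S.filter (π ∣ ·) ∩ S.filter (star π ∣ ·)) := by rw [hunion, hinter]
    _ = #(S.filter (π ∣ ·)) + #(S.filter (star π ∣ ·)) := card_union_add_card_inter _ _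
    _ = 2 * #(withNorm M) := by rw [card_filter_dvd_withNorm_mul hπ.ne_zero, hstar, two_mul]

theorem card_withNorm_pow_of_not_dvd_star {π : GaussianInt} (hπ : π.norm.natAbs.Prime)
    (hπs : ¬π ∣ star π) (k : ℕ) : #(withNorm (π.norm.natAbs ^ k)) = 4 * (k + 1) := by
  classical
  have hrec := card_withNorm_mul_add_card_filter (prime_of_natAbs_norm_prime hπ) hπs
  set p := π.norm.natAbs
  induction k using Nat.twoStepInduction with
  | zero => simp [card_withNorm_one]
  | one =>
    have hp : (withNorm (p * 1)).filter ((p : GaussianInt) ∣ ·) = ∅ := by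
      refine filter_eq_empty_iff.mpr fun z hz hpz => hπ.one_lt.ne' ?_
      have := natAbs_norm_dvd_natAbs_norm hpz
      rw [natAbs_norm_natCast, mem_withNorm.mp hz] at this
      exact Nat.dvd_one.mp ((Nat.mul_dvd_mul_iff_left hπ.pos).mp this)
    have := hrec 1
    rw [hp, card_empty, card_withNorm_one, mul_one] at this
    rw [pow_one]
    omega
  | more k ih₀ ih₁ =>
    have hp : #((withNorm (p * p ^ (k + 1))).filter ((p : GaussianInt) ∣ ·)) =
        #(withNorm (p ^ k)) := by
      rw [show p * p ^ (k + 1) = (p : GaussianInt).norm.natAbs * p ^ k by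
        rw [natAbs_norm_natCast]; ring]
      exact card_filter_dvd_withNorm_mul (Nat.cast_ne_zero.mpr hπ.ne_zero) _
    have := hrec (p ^ (k + 1))
    rw [hp, ← pow_succ', ih₀, ih₁] at this
    show #(withNorm (p ^ (k + 1 + 1))) = _
    omega

theorem exists_natAbs_norm_eq_not_dvd_star {p : ℕ} (hp : p.Prime) (hp1 : p % 4 = 1) :
    ∃ π : GaussianInt, π.norm.natAbs = p ∧ ¬π ∣ star π := by
  have := Fact.mk hp
  obtain ⟨a, b, hab⟩ := Nat.Prime.sq_add_sq (p := p) (by omega)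
  refine ⟨⟨a, b⟩, natAbs_norm_eq_iff.mpr (by rw [← hab]; push_cast; rfl), fun hdvd => ?_⟩
  obtain ⟨u, hu⟩ := associated_of_dvd_dvd hdvd (by simpa using star_dvd_star hdvd)
  have hu1 : (u : GaussianInt) ∈ withNorm 1 :=
    mem_withNorm.mpr (Zsqrtd.norm_eq_one_iff.mpr u.isUnit)
  simp only [withNorm_one, mem_insert, mem_singleton] at hu1
  have hba : b = 0 ∨ a = 0 ∨ a = b := by
    rcases hu1 with h | h | h | h <;> simp [h, Zsqrtd.ext_iff] at hu <;> omega
  rcases hba with rfl | rfl | rfl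
  · exact Nat.Prime.not_prime_pow' (n := 2) (by norm_num) (by simpa [← hab] using hp)
  · exact Nat.Prime.not_prime_pow' (n := 2) (by norm_num) (by simpa [← hab] using hp)
  · omega

theorem card_withNorm_prime_pow {p : ℕ} (hp : p.Prime) (k : ℕ) :
    (#(withNorm (p ^ k)) : ℤ) = 4 * ∑ d ∈ (p ^ k).divisors, χ₄ d := by
  simp only [Nat.sum_divisors_prime_pow hp, Nat.cast_pow, map_pow]
  rcases hp.eq_two_or_odd with rfl | hodd
  · simp [card_withNorm_two_pow, sum_range_succ']
  obtain hp1 | hp3 : p % 4 = 1 ∨ p % 4 = 3 := by omega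
  · obtain ⟨π, hπp, hπ⟩ := exists_natAbs_norm_eq_not_dvd_star hp hp1
    rw [χ₄_nat_one_mod_four hp1, ← hπp, card_withNorm_pow_of_not_dvd_star (hπp ▸ hp) hπ]
    simp
  · rw [card_withNorm_pow_of_mod_four_eq_three hp hp3, χ₄_nat_three_mod_four hp3,
      neg_one_geom_sum]
    by_cases hk : Even k <;> simp [hk, Nat.even_add_one]

theorem card_withNorm_eq_four_mul_sum_divisors {n : ℕ} (hn : n ≠ 0) :
    (#(withNorm n) : ℤ) = 4 * ∑ d ∈ n.divisors, χ₄ d := by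
  induction n using Nat.recOnPosPrimePosCoprime with
  | prime_pow p k hp _ => exact card_withNorm_prime_pow hp k
  | zero => exact absurd rfl hn
  | one => simp [card_withNorm_one]
  | coprime a b ha hb hab iha ihb =>
    have h := congrArg (Nat.cast : ℕ → ℤ) (card_withNorm_mul (by omega) hab)
    push_cast at h
    rw [iha (by omega), ihb (by omega)] at h
    rw [hab.sum_divisors_mulChar_mul]
    linarith

theorem ncard_setOf_sq_add_sq_eq (n : ℕ) :
    {q : ℤ × ℤ | q.1 ^ 2 + q.2 ^ 2 = n}.ncard = #(withNorm n) := by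
  have hinj : Function.Injective fun z : GaussianInt => (z.re, z.im) :=
    fun z w h => Zsqrtd.ext_iff.mpr (Prod.ext_iff.mp h)
  rw [← Set.ncard_coe_finset, ← Set.ncard_image_of_injective _ hinj]
  congr 1
  ext ⟨a, b⟩
  simp only [Set.mem_image, mem_coe, mem_withNorm, Prod.mk.injEq]
  constructor
  · exact fun h => ⟨⟨a, b⟩, natAbs_norm_eq_iff.mpr h, rfl, rfl⟩
  · rintro ⟨z, hz, rfl, rfl⟩
    exact natAbs_norm_eq_iff.mp hz

end GaussianInt

/-- `r₂(n)`: number of ordered representations of `n` as a sum of two integer squares. -/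
theorem two_squares_formula (n : ℕ) (hn : 0 < n) :
    ({p : ℤ × ℤ | p.1 ^ 2 + p.2 ^ 2 = (n : ℤ)}.ncard : ℤ) =
      4 * (((n.divisors.filter (fun d => d % 4 = 1)).card : ℤ) -
           ((n.divisors.filter (fun d => d % 4 = 3)).card : ℤ)) := by
  rw [GaussianInt.ncard_setOf_sq_add_sq_eq,
    GaussianInt.card_withNorm_eq_four_mul_sum_divisors hn.ne', Nat.sum_divisors_χ₄_eq_card_sub_card]
end

section
/- For every positive integer m and s, ∑ over s-tuples of odd positive integers (a_1,...,a_s),(r_1,...,r_s) with a_1r_1+⋯+a_sr_s = m of ∏_i a_i ∏_{i<j}(a_i²−a_j²)² equals (−1)^{s(s−1)/2} s! times the same sum with summand ∏_i a_i^{2i−1} ∏_{i<j}(a_i²−a_j²). -/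
open Finset

private lemma my_prod_neg {α : Type*} (t : Finset α) (f : α → ℤ) :
    ∏ j ∈ t, (-f j) = (-1 : ℤ) ^ t.card * ∏ j ∈ t, f j := by
  rw [← Finset.prod_const (-1 : ℤ), ← Finset.prod_mul_distrib]
  exact Finset.prod_congr rfl fun j _ => by ring

private lemma pairs_card (s : ℕ) :
    ∑ i : Fin s, (Finset.Ioi i).card = s * (s - 1) / 2 := by
  have h1 : ∑ i : Fin s, (Finset.Ioi i).card = ∑ i ∈ Finset.range s, (s - 1 - i) := by
    rw [← Fin.sum_univ_eq_sum_range]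
    exact Finset.sum_congr rfl fun i _ => Fin.card_Ioi i
  rw [h1, Finset.sum_range_reflect (fun i => i) s, Finset.sum_range_id]

private lemma prod_sub_comm {s : ℕ} (x : Fin s → ℤ) :
    ∏ i, ∏ j ∈ Finset.Ioi i, (x i - x j)
      = (-1 : ℤ) ^ (s * (s - 1) / 2) * ∏ i, ∏ j ∈ Finset.Ioi i, (x j - x i) := by
  have h : ∀ i : Fin s, ∏ j ∈ Finset.Ioi i, (x i - x j)
      = (-1 : ℤ) ^ (Finset.Ioi i).card * ∏ j ∈ Finset.Ioi i, (x j - x i) := by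
    intro i
    rw [← my_prod_neg]
    exact Finset.prod_congr rfl fun j _ => by ring
  rw [Finset.prod_congr rfl fun i _ => h i, Finset.prod_mul_distrib,
    Finset.prod_pow_eq_pow_sum, pairs_card]

private def Vd {s : ℕ} (a : Fin s → ℤ) : ℤ :=
  ∏ i, ∏ j ∈ Finset.Ioi i, (a i ^ 2 - a j ^ 2)

private lemma Vd_eq_det {s : ℕ} (a : Fin s → ℤ) :
    Vd a = (-1 : ℤ) ^ (s * (s - 1) / 2)
      * (Matrix.vandermonde fun i => a i ^ 2).det := by
  rw [Matrix.det_vandermonde, Vd, prod_sub_comm (fun i => a i ^ 2)]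

private lemma neg_one_sq_pow (C : ℕ) : ((-1 : ℤ) ^ C) * ((-1 : ℤ) ^ C) = 1 := by
  rw [← pow_add]
  exact Even.neg_one_pow ⟨C, rfl⟩

private lemma det_eq_Vd {s : ℕ} (a : Fin s → ℤ) :
    (Matrix.vandermonde fun i => a i ^ 2).det
      = (-1 : ℤ) ^ (s * (s - 1) / 2) * Vd a := by
  rw [Vd_eq_det, ← mul_assoc, neg_one_sq_pow, one_mul]

private lemma Vd_perm {s : ℕ} (a : Fin s → ℤ) (σ : Equiv.Perm (Fin s)) :
    Vd (a ∘ σ) = (Equiv.Perm.sign σ : ℤ) * Vd a := by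
  have h : (Matrix.vandermonde fun i => (a ∘ σ) i ^ 2)
      = (Matrix.vandermonde fun i => a i ^ 2).submatrix σ id := rfl
  rw [Vd_eq_det, h, Matrix.det_permute, Vd_eq_det]
  push_cast
  ring

private lemma key {s : ℕ} (a : Fin s → ℤ) :
    (∏ i, a i) * ∏ i, ∏ j ∈ Finset.Ioi i, (a i ^ 2 - a j ^ 2) ^ 2
      = (-1 : ℤ) ^ (s * (s - 1) / 2) *
        ∑ σ : Equiv.Perm (Fin s),
          (∏ i : Fin s, (a ∘ σ) i ^ (2 * i.1 + 1)) * Vd (a ∘ σ) := by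
  have hG : ∀ σ : Equiv.Perm (Fin s),
      (∏ i : Fin s, (a ∘ σ) i ^ (2 * i.1 + 1)) * Vd (a ∘ σ)
        = (∏ i, a i) * Vd a *
          ((Equiv.Perm.sign σ : ℤ) * ∏ i : Fin s,
            (Matrix.vandermonde fun k => a k ^ 2) (σ i) i) := by
    intro σ
    rw [Vd_perm]
    have h1 : ∀ i : Fin s, (a ∘ σ) i ^ (2 * i.1 + 1)
        = (a (σ i)) * ((a (σ i)) ^ 2) ^ i.1 := fun i => by
      rw [Function.comp_apply, ← pow_mul, mul_comm (a (σ i)), ← pow_succ]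
    rw [Finset.prod_congr rfl fun i _ => h1 i, Finset.prod_mul_distrib,
      Equiv.prod_comp σ a]
    simp only [Matrix.vandermonde_apply]
    ring
  have hdet : ∑ σ : Equiv.Perm (Fin s),
      (Equiv.Perm.sign σ : ℤ) * ∏ i : Fin s,
        (Matrix.vandermonde fun k => a k ^ 2) (σ i) i
      = (Matrix.vandermonde fun k => a k ^ 2).det := by
    rw [Matrix.det_apply']
    simp
  rw [Finset.sum_congr rfl fun σ _ => hG σ, ← Finset.mul_sum, hdet, det_eq_Vd]
  have hsq : Vd a * Vd a = ∏ i, ∏ j ∈ Finset.Ioi i, (a i ^ 2 - a j ^ 2) ^ 2 := by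
    rw [Vd, ← Finset.prod_mul_distrib]
    exact Finset.prod_congr rfl fun i _ => by
      rw [← Finset.prod_mul_distrib]
      exact Finset.prod_congr rfl fun j _ => (sq _).symm
  rw [← hsq]
  linear_combination (-(∏ i, a i) * (Vd a * Vd a)) * neg_one_sq_pow (s * (s - 1) / 2)

private lemma bdd {s m : ℕ} {a r : Fin s → ℕ} (hr : ∀ i, Odd (r i))
    (h : ∑ i, a i * r i = m) (i : Fin s) : a i < m + 1 := by
  have h1 : a i * r i ≤ m := h ▸ Finset.single_le_sum
    (f := fun j => a j * r j) (fun j _ => Nat.zero_le _) (Finset.mem_univ i)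
  obtain ⟨k, hk⟩ := hr i
  nlinarith [Nat.zero_le (a i * k)]

private def permShift {s m : ℕ} (σ : Equiv.Perm (Fin s)) :
    {p : (Fin s → ℕ) × (Fin s → ℕ) //
        (∀ i, Odd (p.1 i)) ∧ (∀ i, Odd (p.2 i)) ∧ (∑ i, p.1 i * p.2 i) = m} ≃
    {p : (Fin s → ℕ) × (Fin s → ℕ) //
        (∀ i, Odd (p.1 i)) ∧ (∀ i, Odd (p.2 i)) ∧ (∑ i, p.1 i * p.2 i) = m} where
  toFun p := ⟨(p.1.1 ∘ σ, p.1.2 ∘ σ), fun i => p.2.1 (σ i), fun i => p.2.2.1 (σ i),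
    (Equiv.sum_comp σ fun i => p.1.1 i * p.1.2 i).trans p.2.2.2⟩
  invFun p := ⟨(p.1.1 ∘ σ.symm, p.1.2 ∘ σ.symm), fun i => p.2.1 (σ.symm i), fun i => p.2.2.1 (σ.symm i),
    (Equiv.sum_comp σ.symm fun i => p.1.1 i * p.1.2 i).trans p.2.2.2⟩
  left_inv p := by
    apply Subtype.ext
    refine Prod.ext (funext fun i => ?_) (funext fun i => ?_) <;>
      simp [Function.comp]
  right_inv p := by
    apply Subtype.ext
    refine Prod.ext (funext fun i => ?_) (funext fun i => ?_) <;>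
      simp [Function.comp]

/-- `R_s(m, ∏ Xᵢ ∏_{i<j}(Xᵢ²−Xⱼ²)²) = (−1)^{s(s−1)/2} s! ⬝ R_s(m, ∏ Xᵢ^{2i−1} ∏_{i<j}(Xᵢ²−Xⱼ²))`,
where `R_s(m,P)` sums `P(a₁,…,a_s)` over odd positive `aᵢ, rᵢ` with `∑ aᵢrᵢ = m`. -/
theorem symmetrized_sum_identity (s m : ℕ) (hs : 0 < s) (hm : 0 < m) :
    (∑' p : {p : (Fin s → ℕ) × (Fin s → ℕ) //
        (∀ i, Odd (p.1 i)) ∧ (∀ i, Odd (p.2 i)) ∧ (∑ i, p.1 i * p.2 i) = m},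
      ((∏ i, ((p.1.1 i : ℤ))) *
        ∏ i : Fin s, ∏ j ∈ Finset.Ioi i, (((p.1.1 i : ℤ)) ^ 2 - ((p.1.1 j : ℤ)) ^ 2) ^ 2)) =
    (-1 : ℤ) ^ (s * (s - 1) / 2) * (s.factorial : ℤ) *
      ∑' p : {p : (Fin s → ℕ) × (Fin s → ℕ) //
          (∀ i, Odd (p.1 i)) ∧ (∀ i, Odd (p.2 i)) ∧ (∑ i, p.1 i * p.2 i) = m},
        ((∏ i : Fin s, ((p.1.1 i : ℤ)) ^ (2 * i.1 + 1)) *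
          ∏ i : Fin s, ∏ j ∈ Finset.Ioi i, (((p.1.1 i : ℤ)) ^ 2 - ((p.1.1 j : ℤ)) ^ 2)) := by
  classical
  haveI : Finite {p : (Fin s → ℕ) × (Fin s → ℕ) //
      (∀ i, Odd (p.1 i)) ∧ (∀ i, Odd (p.2 i)) ∧ (∑ i, p.1 i * p.2 i) = m} := by
    have hb2 : ∀ p : {p : (Fin s → ℕ) × (Fin s → ℕ) //
        (∀ i, Odd (p.1 i)) ∧ (∀ i, Odd (p.2 i)) ∧ (∑ i, p.1 i * p.2 i) = m},
        ∀ i, p.1.2 i < m + 1 := by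
      intro p
      exact bdd p.2.1
        ((Finset.sum_congr rfl fun j _ => mul_comm _ _).trans p.2.2.2)
    apply Finite.of_injective (β := (Fin s → Fin (m + 1)) × (Fin s → Fin (m + 1)))
      (fun p => (fun i => ⟨p.1.1 i, bdd p.2.2.1 p.2.2.2 i⟩,
                 fun i => ⟨p.1.2 i, hb2 p i⟩))
    intro p q h
    have h1 := congrFun (congrArg Prod.fst h)
    have h2 := congrFun (congrArg Prod.snd h)
    apply Subtype.ext
    refine Prod.ext (funext fun i => ?_) (funext fun i => ?_)
    · simpa using congrArg Fin.val (h1 i)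
    · simpa using congrArg Fin.val (h2 i)
  haveI : Fintype {p : (Fin s → ℕ) × (Fin s → ℕ) //
      (∀ i, Odd (p.1 i)) ∧ (∀ i, Odd (p.2 i)) ∧ (∑ i, p.1 i * p.2 i) = m} :=
    Fintype.ofFinite _
  rw [tsum_fintype, tsum_fintype]
  have step : ∀ p : {p : (Fin s → ℕ) × (Fin s → ℕ) //
      (∀ i, Odd (p.1 i)) ∧ (∀ i, Odd (p.2 i)) ∧ (∑ i, p.1 i * p.2 i) = m},
      ((∏ i, ((p.1.1 i : ℤ))) *
        ∏ i : Fin s, ∏ j ∈ Finset.Ioi i, (((p.1.1 i : ℤ)) ^ 2 - ((p.1.1 j : ℤ)) ^ 2) ^ 2)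
      = (-1 : ℤ) ^ (s * (s - 1) / 2) * ∑ σ : Equiv.Perm (Fin s),
          (∏ i : Fin s, ((fun k => (p.1.1 k : ℤ)) ∘ σ) i ^ (2 * i.1 + 1)) *
            Vd ((fun k => (p.1.1 k : ℤ)) ∘ σ) :=
    fun p => key fun k => (p.1.1 k : ℤ)
  rw [Finset.sum_congr rfl fun p _ => step p, ← Finset.mul_sum, Finset.sum_comm]
  have hσ : ∀ σ : Equiv.Perm (Fin s),
      (∑ p : {p : (Fin s → ℕ) × (Fin s → ℕ) //
          (∀ i, Odd (p.1 i)) ∧ (∀ i, Odd (p.2 i)) ∧ (∑ i, p.1 i * p.2 i) = m},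
        (∏ i : Fin s, ((fun k => (p.1.1 k : ℤ)) ∘ σ) i ^ (2 * i.1 + 1)) *
          Vd ((fun k => (p.1.1 k : ℤ)) ∘ σ))
      = ∑ p : {p : (Fin s → ℕ) × (Fin s → ℕ) //
          (∀ i, Odd (p.1 i)) ∧ (∀ i, Odd (p.2 i)) ∧ (∑ i, p.1 i * p.2 i) = m},
        ((∏ i : Fin s, ((p.1.1 i : ℤ)) ^ (2 * i.1 + 1)) *
          ∏ i : Fin s, ∏ j ∈ Finset.Ioi i, (((p.1.1 i : ℤ)) ^ 2 - ((p.1.1 j : ℤ)) ^ 2)) := by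
    intro σ
    exact Fintype.sum_equiv (permShift σ) _ _ (fun p => rfl)
  rw [Finset.sum_congr rfl fun σ _ => hσ σ, Finset.sum_const, Finset.card_univ,
    Fintype.card_perm, Fintype.card_fin, nsmul_eq_mul]
  ring
end
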